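/- arXiv:1906.05744 — 3 statements merged into one kernel-verified Lean document; each statement's English description precedes it below -/
import Mathlib

section
/- Let T be a simplicial tree, let A₁, A₂, A₃ ⊆ T be three pairwise disjoint half-trees, and let g ∈ Aut(T). Then either there exists i ∈ {1,2,3} such that A_i and g(A_i) are disjoint, or g(A_i) = A_i for every i ∈ {1,2,3}. -/
/-!
The half-tree of the edge `(u, v)` consists of the vertices strictly closer to `v` than to `u`.
Automorphisms therefore act on half-trees by moving the edge; a geodesic leaves a half-tree only
through its edge, so two half-trees are nested, disjoint, or cover `T`. If no `Aᵢ` is disjoint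
from its image, covering is ruled out with the help of a second `Aⱼ`, so each `g Aᵢ` is nested
with `Aᵢ`, and two of the three, say `A` and `B` with edges `(u, v)` and `(x, y)`, are nested in
the same direction. If `g A ⊆ A` and `g B ⊆ B`, distances along the geodesic from `v` to `y`
force `g` to fix `v`, `y` and then `u`, so `g A = A`.
Finally a fixed `Aⱼ` makes every other `Aᵢ`, being nested with its image, fixed as well.
-/

open Set

universe v

variable {V : Type v}

/-- A permutation of the vertex set is an automorphism of the graph `T`. -/
def IsAut (T : SimpleGraph V) (g : Equiv.Perm V) : Prop :=
  ∀ u v : V, T.Adj (g u) (g v) ↔ T.Adj u v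

/-- The half-tree determined by an (oriented) edge `(u, v)`: the set of vertices whose
geodesic to `u` passes through `v`. -/
def halfTree (T : SimpleGraph V) (u v : V) : Set V :=
  {w : V | ∀ p : T.Walk w u, v ∈ p.support}

/-- A half-tree of `T`. -/
def IsHalfTree (T : SimpleGraph V) (A : Set V) : Prop :=
  ∃ u v : V, T.Adj u v ∧ A = halfTree T u v

open SimpleGraph

namespace SimpleGraph

variable {V' : Type*} {G : SimpleGraph V} {G' : SimpleGraph V'} {u v : V}

lemma Reachable.dist_map_le (f : G →g G') (h : G.Reachable u v) :
    G'.dist (f u) (f v) ≤ G.dist u v := by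
  obtain ⟨p, hp⟩ := h.exists_walk_length_eq_dist
  exact (dist_le (p.map f)).trans_eq (by rw [Walk.length_map, hp])

lemma Iso.dist_apply (φ : G ≃g G') (u v : V) : G'.dist (φ u) (φ v) = G.dist u v := by
  by_cases h : G.Reachable u v
  · refine le_antisymm (h.dist_map_le φ.toHom) ?_
    simpa using (h.map φ.toHom).dist_map_le φ.symm.toHom
  · rw [dist_eq_zero_of_not_reachable h,
      dist_eq_zero_of_not_reachable (Iso.reachable_iff.not.mpr h)]

lemma IsTree.length_eq_dist_of_isPath (hG : G.IsTree) {p : G.Walk u v} (hp : p.IsPath) :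
    p.length = G.dist u v := by
  obtain ⟨q, hq, hlen⟩ := hG.connected.exists_path_of_dist u v
  have hpq : p = q :=
    congrArg Subtype.val ((hG.isAcyclic.subsingleton_path u v).elim ⟨p, hp⟩ ⟨q, hq⟩)
  rw [hpq, hlen]

lemma IsTree.dist_eq_add_of_mem_support (hG : G.IsTree) {p : G.Walk u v} (hp : p.IsPath)
    {m : V} (hm : m ∈ p.support) : G.dist u v = G.dist u m + G.dist m v := by
  classical
  rw [← hG.length_eq_dist_of_isPath hp, ← hG.length_eq_dist_of_isPath (hp.takeUntil hm),
    ← hG.length_eq_dist_of_isPath (hp.dropUntil hm), ← Walk.length_append, Walk.take_spec]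

end SimpleGraph

section HalfTree

variable {T : SimpleGraph V} {u v w : V}

lemma mem_halfTree_self : v ∈ halfTree T u v :=
  fun p => p.start_mem_support

lemma mem_halfTree_iff_of_isPath (hT : T.IsTree) {p : T.Walk w u} (hp : p.IsPath) :
    w ∈ halfTree T u v ↔ v ∈ p.support := by
  refine ⟨fun h => h p, fun hv q => ?_⟩
  classical
  have hq : q.toPath = ⟨p, hp⟩ := (hT.isAcyclic.subsingleton_path w u).elim _ _
  exact q.support_toPath_subset_support (by rwa [hq])

lemma mem_halfTree_iff_dist_lt (hT : T.IsTree) (huv : T.Adj u v) :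
    w ∈ halfTree T u v ↔ T.dist w v < T.dist w u := by
  constructor
  · intro hw
    obtain ⟨p, hp, -⟩ := hT.connected.exists_path_of_dist w u
    rw [hT.dist_eq_add_of_mem_support hp (hw p), dist_eq_one_iff_adj.mpr huv.symm]
    omega
  · intro hlt
    obtain ⟨q, hq, hlen⟩ := hT.connected.exists_path_of_dist w v
    have hqu : (q.concat huv.symm).IsPath := by
      refine (q.concat huv.symm).isPath_of_length_eq_dist ?_
      rw [Walk.length_concat, hlen]
      have := hT.dist_eq_dist_add_one_of_adj w huv
      omega
    exact (mem_halfTree_iff_of_isPath hT hqu).mpr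
      (q.support_subset_support_concat _ q.end_mem_support)

lemma halfTree_compl (hT : T.IsTree) (huv : T.Adj u v) :
    (halfTree T u v)ᶜ = halfTree T v u := by
  ext w
  rw [mem_compl_iff, mem_halfTree_iff_dist_lt hT huv, mem_halfTree_iff_dist_lt hT huv.symm]
  have := hT.dist_eq_dist_add_one_of_adj w huv
  omega

lemma eq_of_adj_of_mem_halfTree_of_notMem (hT : T.IsTree) (huv : T.Adj u v) {a b : V}
    (hab : T.Adj a b) (ha : a ∈ halfTree T u v) (hb : b ∉ halfTree T u v) : a = v ∧ b = u := by
  classical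
  obtain ⟨r, hr, -⟩ := hT.connected.exists_path_of_dist b u
  have hvr : v ∉ r.support := (mem_halfTree_iff_of_isPath hT hr).not.mp hb
  have har : a ∉ r.support := fun har => hvr <| r.support_dropUntil_subset_support har <|
    (mem_halfTree_iff_of_isPath hT (hr.dropUntil har)).mp ha
  have hav : a = v := by
    have hv := (mem_halfTree_iff_of_isPath hT (hr.cons (h := hab) har)).mp ha
    rw [Walk.support_cons, List.mem_cons] at hv
    exact (hv.resolve_right hvr).symm
  subst hav
  refine ⟨rfl, hT.connected.dist_eq_zero_iff.mp ?_⟩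
  rw [mem_halfTree_iff_dist_lt hT huv] at hb
  have := hT.dist_eq_dist_add_one_of_adj b huv
  have := dist_eq_one_iff_adj.mpr hab.symm
  omega

lemma dist_eq_add_of_mem_halfTree_of_notMem (hT : T.IsTree) (huv : T.Adj u v) {a b : V}
    (ha : a ∈ halfTree T u v) (hb : b ∉ halfTree T u v) :
    T.dist a b = T.dist a v + T.dist v b := by
  obtain ⟨p, hp, -⟩ := hT.connected.exists_path_of_dist a b
  obtain ⟨d, hd, hd₁, hd₂⟩ := p.exists_boundary_dart _ ha hb
  have hdv : d.fst = v := (eq_of_adj_of_mem_halfTree_of_notMem hT huv d.adj hd₁ hd₂).1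
  exact hT.dist_eq_add_of_mem_support hp (hdv ▸ p.dart_fst_mem_support_of_mem_darts hd)

lemma halfTree_subset_or_disjoint (hT : T.IsTree) (huv : T.Adj u v) {x y : V} (hxy : T.Adj x y)
    (hx : x ∉ halfTree T u v) (hy : y ∉ halfTree T u v) :
    halfTree T u v ⊆ halfTree T x y ∨ Disjoint (halfTree T u v) (halfTree T x y) := by
  have key : ∀ w ∈ halfTree T u v, w ∈ halfTree T x y ↔ v ∈ halfTree T x y := by
    intro w hw
    rw [mem_halfTree_iff_dist_lt hT hxy, mem_halfTree_iff_dist_lt hT hxy,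
      dist_eq_add_of_mem_halfTree_of_notMem hT huv hw hx,
      dist_eq_add_of_mem_halfTree_of_notMem hT huv hw hy]
    omega
  by_cases hv : v ∈ halfTree T x y
  · exact .inl fun w hw => (key w hw).mpr hv
  · exact .inr <| disjoint_left.mpr fun w hw hwB => hv ((key w hw).mp hwB)

lemma IsHalfTree.subset_or_subset_or_disjoint_or_union_eq_univ (hT : T.IsTree) {A B : Set V}
    (hA : IsHalfTree T A) (hB : IsHalfTree T B) :
    A ⊆ B ∨ B ⊆ A ∨ Disjoint A B ∨ A ∪ B = univ := by
  obtain ⟨u, v, huv, rfl⟩ := hA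
  obtain ⟨x, y, hxy, rfl⟩ := hB
  by_cases hx : x ∈ halfTree T u v <;> by_cases hy : y ∈ halfTree T u v
  · rw [← notMem_compl_iff, halfTree_compl hT huv] at hx hy
    rcases halfTree_subset_or_disjoint hT huv.symm hxy hx hy with h | h
    · rw [← halfTree_compl hT huv, compl_subset_iff_union] at h
      exact .inr (.inr (.inr h))
    · rw [← halfTree_compl hT huv, disjoint_compl_left_iff_subset] at h
      exact .inr (.inl h)
  · obtain ⟨rfl, rfl⟩ := eq_of_adj_of_mem_halfTree_of_notMem hT huv hxy hx hy
    rw [← halfTree_compl hT huv]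
    exact .inr (.inr (.inl disjoint_compl_right))
  · obtain ⟨rfl, rfl⟩ := eq_of_adj_of_mem_halfTree_of_notMem hT huv hxy.symm hy hx
    exact .inl subset_rfl
  · rcases halfTree_subset_or_disjoint hT huv hxy hx hy with h | h
    · exact .inl h
    · exact .inr (.inr (.inl h))

end HalfTree

section Automorphism

variable {T : SimpleGraph V} {g : Equiv.Perm V}

def IsAut.toIso (hg : IsAut T g) : T ≃g T := ⟨g, hg _ _⟩

lemma IsAut.inv (hg : IsAut T g) : IsAut T g⁻¹ := fun _ _ => hg.toIso.symm.map_adj_iff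

lemma IsAut.dist_apply (hg : IsAut T g) (a b : V) : T.dist (g a) (g b) = T.dist a b :=
  hg.toIso.dist_apply a b

lemma IsAut.image_halfTree (hT : T.IsTree) (hg : IsAut T g) {u v : V} (huv : T.Adj u v) :
    g '' halfTree T u v = halfTree T (g u) (g v) := by
  ext w
  rw [mem_image_equiv, mem_halfTree_iff_dist_lt hT huv,
    mem_halfTree_iff_dist_lt hT ((hg u v).mpr huv), ← hg.dist_apply (g.symm w),
    ← hg.dist_apply (g.symm w), Equiv.apply_symm_apply]

namespace IsHalfTree

variable {A B : Set V}

lemma image (hT : T.IsTree) (hg : IsAut T g) (hA : IsHalfTree T A) : IsHalfTree T (g '' A) := by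
  obtain ⟨u, v, huv, rfl⟩ := hA
  exact ⟨g u, g v, (hg u v).mpr huv, hg.image_halfTree hT huv⟩

lemma image_eq_of_image_subset (hT : T.IsTree) (hg : IsAut T g) (hA : IsHalfTree T A)
    (hB : IsHalfTree T B) (hAB : Disjoint A B) (hgA : g '' A ⊆ A) (hgB : g '' B ⊆ B) :
    g '' A = A := by
  obtain ⟨u, v, huv, rfl⟩ := hA
  obtain ⟨x, y, hxy, rfl⟩ := hB
  have hv : v ∈ halfTree T u v := mem_halfTree_self
  have hgv : g v ∈ halfTree T u v := hgA (mem_image_of_mem g hv)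
  have hgy : g y ∈ halfTree T x y := hgB (mem_image_of_mem g mem_halfTree_self)
  have hyA : y ∉ halfTree T u v := disjoint_right.mp hAB mem_halfTree_self
  -- The geodesic from `g v` to `g y` runs through `v` and `y`,
  -- yet it is as long as the one from `v` to `y`.
  have hgvy : g v = v ∧ g y = y := by
    have h₀ := hg.dist_apply v y
    have h₁ := dist_eq_add_of_mem_halfTree_of_notMem hT huv hgv (disjoint_right.mp hAB hgy)
    have h₂ := dist_eq_add_of_mem_halfTree_of_notMem hT hxy hgy (disjoint_left.mp hAB hv)
    have c₁ : T.dist v (g y) = T.dist (g y) v := dist_comm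
    have c₂ : T.dist y v = T.dist v y := dist_comm
    constructor <;> apply hT.connected.dist_eq_zero_iff.mp <;> omega
  obtain ⟨hgv, hgy⟩ := hgvy
  have hgu : g u = u := by
    have hadj : T.Adj v (g u) := hgv ▸ (hg v u).mpr huv.symm
    by_cases hguA : g u ∈ halfTree T u v
    · -- then `g u` would be farther than `v` from `y = g y`, hence farther than `u`
      have h₀ := hg.dist_apply u y
      have h₁ := dist_eq_add_of_mem_halfTree_of_notMem hT huv hguA hyA
      have h₂ := dist_eq_one_iff_adj.mpr hadj.symm
      have h₃ := (mem_halfTree_iff_dist_lt hT huv).not.mp hyA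
      have h₄ := hT.dist_eq_dist_add_one_of_adj y huv
      have c₁ : T.dist u y = T.dist y u := dist_comm
      have c₂ : T.dist v y = T.dist y v := dist_comm
      rw [hgy] at h₀
      omega
    · exact (eq_of_adj_of_mem_halfTree_of_notMem hT huv hadj hv hguA).2
  rw [hg.image_halfTree hT huv, hgu, hgv]

lemma image_eq_of_subset_image (hT : T.IsTree) (hg : IsAut T g) (hA : IsHalfTree T A)
    (hB : IsHalfTree T B) (hAB : Disjoint A B) (hgA : A ⊆ g '' A) (hgB : B ⊆ g '' B) :
    g '' A = A :=
  ((g.eq_image_iff_symm_image_eq A A).mpr <| hA.image_eq_of_image_subset hT hg.inv hB hAB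
    ((g.symm_image_subset A A).mpr hgA) ((g.symm_image_subset B B).mpr hgB)).symm

lemma image_eq_of_directed (hT : T.IsTree) (hg : IsAut T g) (hA : IsHalfTree T A)
    (hB : IsHalfTree T B) (hAB : Disjoint A B)
    (hdir : g '' A ⊆ A ∧ g '' B ⊆ B ∨ A ⊆ g '' A ∧ B ⊆ g '' B) : g '' A = A :=
  hdir.elim (fun h => hA.image_eq_of_image_subset hT hg hB hAB h.1 h.2)
    (fun h => hA.image_eq_of_subset_image hT hg hB hAB h.1 h.2)

lemma image_eq_of_image_eq (hT : T.IsTree) (hg : IsAut T g) (hA : IsHalfTree T A)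
    (hB : IsHalfTree T B) (hAB : Disjoint A B) (hgB : g '' B = B)
    (hcomp : g '' A ⊆ A ∨ A ⊆ g '' A) : g '' A = A :=
  hA.image_eq_of_directed hT hg hB hAB (hcomp.imp (⟨·, hgB.subset⟩) (⟨·, hgB.superset⟩))

lemma image_subset_or_subset_image (hT : T.IsTree) (hg : IsAut T g) (hA : IsHalfTree T A)
    (hAB : Disjoint A B) (hAgA : ¬Disjoint A (g '' A))
    (hBgB : ¬Disjoint B (g '' B)) : g '' A ⊆ A ∨ A ⊆ g '' A := by
  rcases hA.subset_or_subset_or_disjoint_or_union_eq_univ hT (hA.image hT hg) with h | h | h | h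
  · exact .inr h
  · exact .inl h
  · exact absurd h hAgA
  · -- `g '' B` misses `g '' A`, hence lies in `A`, which misses `B`.
    refine absurd (hAB.symm.mono_right fun w hw => ?_) hBgB
    have hw' : w ∉ g '' A := disjoint_right.mp ((disjoint_image_iff g.injective).mpr hAB) hw
    exact ((h ▸ mem_univ w : w ∈ A ∪ g '' A)).resolve_right hw'

end IsHalfTree

end Automorphism

/-- **(Le Boudec--Matte Bon, Lemma 3.5.)** Let `A₁, A₂, A₃` be three pairwise disjoint
half-trees of a tree `T` and let `g ∈ Aut(T)`. Then either there is `i` such that `A_i`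
and `g(A_i)` are disjoint, or `g(A_i) = A_i` for every `i`. -/
theorem tree_disjoint_halfTrees_move
    (T : SimpleGraph V) (hT : T.IsTree)
    (A₁ A₂ A₃ : Set V)
    (h₁ : IsHalfTree T A₁) (h₂ : IsHalfTree T A₂) (h₃ : IsHalfTree T A₃)
    (hd₁₂ : Disjoint A₁ A₂) (hd₁₃ : Disjoint A₁ A₃) (hd₂₃ : Disjoint A₂ A₃)
    (g : Equiv.Perm V) (hg : IsAut T g) :
    (Disjoint A₁ (g '' A₁) ∨ Disjoint A₂ (g '' A₂) ∨ Disjoint A₃ (g '' A₃)) ∨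
      (g '' A₁ = A₁ ∧ g '' A₂ = A₂ ∧ g '' A₃ = A₃) := by
  by_cases hn₁ : Disjoint A₁ (g '' A₁)
  · exact .inl (.inl hn₁)
  by_cases hn₂ : Disjoint A₂ (g '' A₂)
  · exact .inl (.inr (.inl hn₂))
  by_cases hn₃ : Disjoint A₃ (g '' A₃)
  · exact .inl (.inr (.inr hn₃))
  have c₁ := h₁.image_subset_or_subset_image hT hg hd₁₂ hn₁ hn₂
  have c₂ := h₂.image_subset_or_subset_image hT hg hd₁₂.symm hn₂ hn₁
  have c₃ := h₃.image_subset_or_subset_image hT hg hd₁₃.symm hn₃ hn₁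
  -- Of three half-trees, two are moved in the same direction.
  have hfix : g '' A₁ = A₁ ∨ g '' A₂ = A₂ := by
    rcases c₁ with c₁ | c₁ <;> rcases c₂ with c₂ | c₂ <;> rcases c₃ with c₃ | c₃
    all_goals first
      | exact .inl (h₁.image_eq_of_directed hT hg h₂ hd₁₂ (by tauto))
      | exact .inl (h₁.image_eq_of_directed hT hg h₃ hd₁₃ (by tauto))
      | exact .inr (h₂.image_eq_of_directed hT hg h₃ hd₂₃ (by tauto))
  refine .inr ?_
  rcases hfix with e | e
  · exact ⟨e, h₂.image_eq_of_image_eq hT hg h₁ hd₁₂.symm e c₂,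
      h₃.image_eq_of_image_eq hT hg h₁ hd₁₃.symm e c₃⟩
  · exact ⟨h₁.image_eq_of_image_eq hT hg h₂ hd₁₂ e c₁, e,
      h₃.image_eq_of_image_eq hT hg h₂ hd₂₃.symm e c₃⟩
end

section
/- Let G ≤ Homeo(S¹) be a group of homeomorphisms of the circle whose action on S¹ is minimal and not topologically free. Suppose that G acts faithfully on a set Ω such that for every unordered pair Δ of distinct elements of Ω, the pointwise stabilizer G_Δ acts minimally on S¹. Then there exists ω ∈ Ω such that the action of the stabilizer G_ω on S¹ is not topologically free. -/
open Set

universe u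

/-- The circle `S¹ = ℝ/ℤ`. -/
abbrev S1 := UnitAddCircle

/-- An action of `G` on `Ω` (given by `ρ : G →* Equiv.Perm Ω`) is `k`-transitive if it is
transitive on ordered `k`-tuples of pairwise distinct elements of `Ω`. -/
def IsKTransitive {G : Type*} [Group G] {Ω : Type*} (ρ : G →* Equiv.Perm Ω) (k : ℕ) : Prop :=
  ∀ x y : Fin k ↪ Ω, ∃ g : G, ∀ i : Fin k, ρ g (x i) = y i

/-- A set of permutations of a topological space acts minimally: every orbit is dense. -/
def MinimalOn {X : Type*} [TopologicalSpace X] (S : Set (Equiv.Perm X)) : Prop :=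
  ∀ x : X, Dense {y : X | ∃ g ∈ S, g x = y}

/-- A set of permutations of the circle is proximal: every proper open arc can be mapped
into every nonempty open arc by some element. -/
def ProximalOn (S : Set (Equiv.Perm S1)) : Prop :=
  ∀ I J : Set S1, IsOpen I → IsPreconnected I → I ≠ univ →
    IsOpen J → IsPreconnected J → J.Nonempty →
    ∃ g ∈ S, (g : Equiv.Perm S1) '' I ⊆ J

/-- A set of permutations acts topologically freely: the fixed-point set of every
non-trivial element has empty interior. -/
def TopologicallyFreeOn {X : Type*} [TopologicalSpace X] (S : Set (Equiv.Perm X)) : Prop :=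
  ∀ g ∈ S, g ≠ 1 → interior {x : X | g x = x} = (∅ : Set X)

/-- A permutation of the circle which is a homeomorphism. -/
def IsCircleHomeo (g : Equiv.Perm S1) : Prop := Continuous g ∧ Continuous g.symm

/-- A permutation of the circle preserves the standard cyclic order (orientation). -/
def OrientationPreserving (g : Equiv.Perm S1) : Prop :=
  ∀ a b c : S1, sbtw a b c → sbtw (g a) (g b) (g c)


/-- The set of permutations of the circle coming from elements of `G` that stabilize the
point `ω` of `Ω` (the stabilizer `G_ω` viewed as acting on the circle). -/
def pointStabSet (G : Subgroup (Equiv.Perm S1)) {Ω : Type u} (ρ : G →* Equiv.Perm Ω)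
    (ω : Ω) : Set (Equiv.Perm S1) :=
  {g : Equiv.Perm S1 | ∃ hg : g ∈ G, ρ ⟨g, hg⟩ ω = ω}

/-- The set of permutations of the circle coming from elements of `G` that fix both points
`ω₁, ω₂` of `Ω` (the pointwise stabilizer `G_Δ` of the pair `Δ = {ω₁, ω₂}`, viewed as acting
on the circle). -/
def pairStabSet (G : Subgroup (Equiv.Perm S1)) {Ω : Type u} (ρ : G →* Equiv.Perm Ω)
    (ω₁ ω₂ : Ω) : Set (Equiv.Perm S1) :=
  {g : Equiv.Perm S1 | ∃ hg : g ∈ G, ρ ⟨g, hg⟩ ω₁ = ω₁ ∧ ρ ⟨g, hg⟩ ω₂ = ω₂}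

/-!
Take `g ∈ G`, `g ≠ 1`, fixing a nonempty open set `U` pointwise, and a point `ω`. If `g` fixes `ω`
we are done; otherwise the pair stabilizer of `{ω, g⁻¹ω}` is minimal, so some `h` in it moves a
frontier point of `U` into `U`. The commutator `⁅g, h⁆` then fixes `ω`, fixes the nonempty open set
`U ∩ h U` pointwise, and is nontrivial because `h⁻¹ U` also contains points moved by `g`.
-/

open scoped commutatorElement

namespace Equiv.Perm

variable {X : Type*} (g h : Equiv.Perm X)

theorem commutatorElement_apply_eq_self {a : X} (ha : h a = a) (hga : h (g⁻¹ a) = g⁻¹ a) :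
    ⁅g, h⁆ a = a := by
  have ha_inv : h⁻¹ a = a := inv_eq_iff_eq.mpr ha.symm
  simp only [commutatorElement_def, mul_apply, ha_inv, hga]
  exact g.apply_symm_apply a

theorem inter_image_subset_fixed_commutatorElement {U : Set X} (hU : U ⊆ {x | g x = x}) :
    U ∩ h '' U ⊆ {x | ⁅g, h⁆ x = x} := by
  rintro _ ⟨hhy, y, hy, rfl⟩
  have hg_inv : g⁻¹ y = y := by rw [inv_eq_iff_eq]; exact (hU hy).symm
  have hh_inv : h⁻¹ (h y) = y := h.symm_apply_apply y
  simp only [Set.mem_ofPred_eq, commutatorElement_def, mul_apply, hh_inv, hg_inv]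
  exact hU hhy

theorem commutatorElement_ne_one {q : X} (hq : g (h q) = h q) (hgq : g q ≠ q) : ⁅g, h⁆ ≠ 1 := by
  intro h1
  have := congrArg (· (h (g q))) h1
  have hh_inv : h⁻¹ (h (g q)) = g q := h.symm_apply_apply (g q)
  have hg_inv : g⁻¹ (g q) = q := g.symm_apply_apply q
  simp only [commutatorElement_def, mul_apply, hh_inv, hg_inv, hq, one_apply] at this
  exact hgq (h.injective this).symm

end Equiv.Perm

theorem exists_commutatorElement_ne_one_and_interior_fixed_nonempty
    {X : Type*} [TopologicalSpace X] (g h : Equiv.Perm X) (hcont : Continuous h)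
    (hcont_symm : Continuous h.symm) {b : X}
    (hb : b ∈ frontier (interior {x | g x = x})) (hhb : h b ∈ interior {x | g x = x}) :
    ⁅g, h⁆ ≠ 1 ∧ (interior {x | ⁅g, h⁆ x = x}).Nonempty := by
  set U := interior {x | g x = x}
  have hN : IsOpen (h ⁻¹' U) := isOpen_interior.preimage hcont
  rw [isOpen_interior.frontier_eq] at hb
  obtain ⟨q, hqN, hgq⟩ : ∃ q ∈ h ⁻¹' U, g q ≠ q := by
    by_contra! hfix
    exact hb.2 (interior_maximal hfix hN hhb)
  obtain ⟨w, hwN, hwU⟩ := mem_closure_iff.mp hb.1 _ hN hhb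
  have hopen : IsOpen (U ∩ h '' U) := by
    rw [h.image_eq_preimage_symm]
    exact isOpen_interior.inter (isOpen_interior.preimage hcont_symm)
  refine ⟨g.commutatorElement_ne_one h (interior_subset (s := {x | g x = x}) hqN) hgq, ?_⟩
  exact ⟨h w, interior_maximal
    (g.inter_image_subset_fixed_commutatorElement h interior_subset) hopen ⟨hwN, w, hwU, rfl⟩⟩

theorem not_topologicallyFreeOn_of_mem {X : Type*} [TopologicalSpace X]
    {S : Set (Equiv.Perm X)} {g : Equiv.Perm X} (hgS : g ∈ S) (hg : g ≠ 1)
    (hint : (interior {x | g x = x}).Nonempty) : ¬ TopologicallyFreeOn S :=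
  fun hfree => hint.ne_empty (hfree g hgS hg)

theorem circle_point_stabilizer_not_topologically_free_general
    (G : Subgroup (Equiv.Perm S1))
    (hHomeo : ∀ g ∈ G, IsCircleHomeo g)
    (hntf : ¬ TopologicallyFreeOn (G : Set (Equiv.Perm S1)))
    (Ω : Type u) (ρ : G →* Equiv.Perm Ω)
    (hfaithful : Function.Injective ρ)
    (hpairmin : ∀ ω₁ ω₂ : Ω, ω₁ ≠ ω₂ → MinimalOn (pairStabSet G ρ ω₁ ω₂)) :
    ∃ ω : Ω, ¬ TopologicallyFreeOn (pointStabSet G ρ ω) := by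
  obtain ⟨g, hgG, hg1, hint⟩ : ∃ g ∈ G, g ≠ 1 ∧ (interior {x | g x = x}).Nonempty := by
    simpa [TopologicallyFreeOn, Set.nonempty_iff_ne_empty] using hntf
  obtain ⟨ω⟩ : Nonempty Ω := by
    by_contra! hΩ
    exact hg1 (congrArg Subtype.val (hfaithful (Subsingleton.elim (ρ ⟨g, hgG⟩) (ρ 1))))
  set g' : G := ⟨g, hgG⟩
  refine ⟨ω, ?_⟩
  by_cases hfix : ρ g' ω = ω
  · exact not_topologicallyFreeOn_of_mem ⟨hgG, hfix⟩ hg1 hint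
  have hne : ω ≠ (ρ g')⁻¹ ω := fun h => hfix (Equiv.Perm.eq_inv_iff_eq.mp h)
  have hproper : interior {x | g x = x} ≠ Set.univ := fun h =>
    hg1 (Equiv.ext fun x => Set.eq_univ_iff_forall.mp (interior_eq_univ.mp h) x)
  obtain ⟨b, hb⟩ := nonempty_frontier_iff.mpr ⟨hint, hproper⟩
  obtain ⟨_, ⟨h, ⟨hhG, hhω, hhω₂⟩, rfl⟩, hhb⟩ :=
    (hpairmin _ _ hne b).exists_mem_open isOpen_interior hint
  set h' : G := ⟨h, hhG⟩
  obtain ⟨hk1, hkint⟩ := exists_commutatorElement_ne_one_and_interior_fixed_nonempty g h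
    (hHomeo h hhG).1 (hHomeo h hhG).2 hb hhb
  have hkω : ρ ⁅g', h'⁆ ω = ω := by
    rw [map_commutatorElement]
    exact Equiv.Perm.commutatorElement_apply_eq_self _ _ hhω hhω₂
  exact not_topologicallyFreeOn_of_mem ⟨(⁅g', h'⁆ : G).2, hkω⟩ hk1 hkint

/-- **(Le Boudec--Matte Bon, Lemma 5.4.)** Let `G ≤ Homeo(S¹)` act minimally and not
topologically freely on `S¹`. Suppose `G` acts faithfully on a set `Ω` in such a way that
the pointwise stabilizer of every unordered pair of distinct points of `Ω` acts minimally
on `S¹`. Then some point stabilizer `G_ω` acts not topologically freely on `S¹`. -/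
theorem circle_point_stabilizer_not_topologically_free
    (G : Subgroup (Equiv.Perm S1))
    (hHomeo : ∀ g ∈ G, IsCircleHomeo g)
    (hmin : MinimalOn (G : Set (Equiv.Perm S1)))
    (hntf : ¬ TopologicallyFreeOn (G : Set (Equiv.Perm S1)))
    (Ω : Type u) (ρ : G →* Equiv.Perm Ω)
    (hfaithful : Function.Injective ρ)
    (hpairmin : ∀ ω₁ ω₂ : Ω, ω₁ ≠ ω₂ → MinimalOn (pairStabSet G ρ ω₁ ω₂)) :
    ∃ ω : Ω, ¬ TopologicallyFreeOn (pointStabSet G ρ ω) :=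
  circle_point_stabilizer_not_topologically_free_general G hHomeo hntf Ω ρ hfaithful hpairmin
end

section
/- Let G ≤ Homeo⁺(ℝ) be a group of orientation-preserving homeomorphisms of the real line acting on ℝ with no global fixed point, and suppose the subgroup G⁰ of compactly supported elements of G is non-trivial. Then the transitivity degree of G is at most 2. -/
open Set

universe u

/-!
Suppose `G` acts faithfully and `3`-transitively on `Ω`. An order-preserving bijection of `ℝ` fixes
its periodic points, so `G` is torsion-free (hence `Ω` is infinite) and the stabiliser of a point of
`ℝ` contains the cube roots of its elements. A subgroup with that property containing the stabiliser
of two points `π₁ ≠ π₂` of `Ω` is everything, since `3`-cycles of `Ω` have their cubes in conjugates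
of that stabiliser. As `G` has no global fixed point, the supremum of an orbit of the stabiliser of
`π₁, π₂` cannot exist: such orbits are unbounded above.

Now let `m ∈ G⁰` fix `d ∈ Ω` and move `ω`. Conjugating `m` by `h` with `h ω = ω`, `h (m ω) = d`, and
by `f` fixing `ω` and `d` and pushing the support of `m` beyond that of `h m h⁻¹`, gives two
commuting conjugates, and evaluating their commutation at `ω` forces `m ω = ω`. So `G⁰` acts freely
on `Ω`, and a free normal subgroup of a `3`-transitive group has exponent `2`, contradicting
torsion-freeness.
-/

open MulAction

theorem commute_of_disjoint_movedBy {Γ α : Type*} [Group Γ] [MulAction Γ α] [FaithfulSMul Γ α]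
    {g h : Γ} (hgh : Disjoint (fixedBy α g)ᶜ (fixedBy α h)ᶜ) : Commute g h := by
  have hdisj : (toPerm g : Equiv.Perm α).Disjoint (toPerm h) := fun x => by
    by_contra! hx
    exact disjoint_left.mp hgh hx.1 hx.2
  refine eq_of_smul_eq_smul (α := α) fun x => ?_
  simpa [mul_smul] using Equiv.congr_fun hdisj.commute.eq x

section OrderedAction

variable {Γ α : Type*} [Group Γ] [LinearOrder α] [MulAction Γ α]

theorem smul_eq_of_pow_smul_eq (hmono : ∀ g : Γ, StrictMono (g • · : α → α))
    {g : Γ} {n : ℕ} (hn : n ≠ 0) {x : α} (h : g ^ n • x = x) : g • x = x := by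
  have := (Function.Commute.id_right (f := (g • · : α → α))).iterate_pos_eq_iff_map_eq
    (hmono g).monotone strictMono_id (Nat.pos_of_ne_zero hn) (x := x)
  simpa [smul_iterate_apply, h] using this

theorem not_isOfFinOrder_of_strictMono_smul [FaithfulSMul Γ α]
    (hmono : ∀ g : Γ, StrictMono (g • · : α → α)) {g : Γ} (hg : g ≠ 1) : ¬IsOfFinOrder g := by
  intro hfin
  obtain ⟨n, hn, hgn⟩ := isOfFinOrder_iff_pow_eq_one.mp hfin
  refine hg (eq_of_smul_eq_smul (α := α) fun x => ?_)
  rw [one_smul]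
  exact smul_eq_of_pow_smul_eq hmono hn.ne' (by rw [hgn, one_smul])

theorem movedBy_conj_subset_Icc (hmono : ∀ g : Γ, StrictMono (g • · : α → α)) {m : Γ} {a b : α}
    (hm : (fixedBy α m)ᶜ ⊆ Icc a b) (g : Γ) :
    (fixedBy α (g * m * g⁻¹))ᶜ ⊆ Icc (g • a) (g • b) := by
  rw [← smul_fixedBy, ← smul_set_compl]
  rintro _ ⟨x, hx, rfl⟩
  exact ⟨(hmono g).monotone (hm hx).1, (hmono g).monotone (hm hx).2⟩

variable (Γ α) in
/-- For `α = ℝ` this is the subgroup `G⁰` of compactly supported elements. -/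
def boundedSupport [Nonempty α] : Subgroup Γ where
  carrier := {g | BddBelow (fixedBy α g)ᶜ ∧ BddAbove (fixedBy α g)ᶜ}
  one_mem' := by
    simp only [mem_ofPred_eq, fixedBy_one_eq_univ, compl_univ]
    exact ⟨bddBelow_empty, bddAbove_empty⟩
  mul_mem' {g h} hg hh := by
    have hsub : (fixedBy α (g * h))ᶜ ⊆ (fixedBy α g)ᶜ ∪ (fixedBy α h)ᶜ := by
      rw [← compl_inter]
      exact compl_subset_compl.mpr (fixedBy_mul α g h)
    exact ⟨(hg.1.union hh.1).mono hsub, (hg.2.union hh.2).mono hsub⟩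
  inv_mem' {g} hg := by simpa only [mem_ofPred_eq, fixedBy_inv] using hg

theorem boundedSupport_normal [Nonempty α] (hmono : ∀ g : Γ, StrictMono (g • · : α → α)) :
    (boundedSupport Γ α).Normal where
  conj_mem m hm g := by
    obtain ⟨a, b, hab⟩ := bddBelow_bddAbove_iff_subset_Icc.mp hm
    exact bddBelow_bddAbove_iff_subset_Icc.mpr ⟨_, _, movedBy_conj_subset_Icc hmono hab g⟩

end OrderedAction

theorem smul_csSup_orbit {Γ α : Type*} [Group Γ] [ConditionallyCompleteLinearOrder α]
    [MulAction Γ α] (hmono : ∀ g : Γ, StrictMono (g • · : α → α)) {x : α}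
    (hbdd : BddAbove (orbit Γ x)) (g : Γ) : g • sSup (orbit Γ x) = sSup (orbit Γ x) := by
  let e : α ≃o α := (hmono g).orderIsoOfSurjective _ (MulAction.surjective g)
  calc g • sSup (orbit Γ x) = sSup (e '' orbit Γ x) := e.map_csSup' ⟨x, mem_orbit_self x⟩ hbdd
    _ = sSup (orbit Γ x) := by
      rw [StrictMono.coe_orderIsoOfSurjective, image_smul, smul_orbit]

section MultiplyTransitive

variable {Γ Ω : Type*} [Group Γ] [MulAction Γ Ω]

variable (Γ) in
theorem exists_smul_eq_of_isMultiplyPretransitive_three [IsMultiplyPretransitive Γ Ω 3]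
    {a b c a' b' c' : Ω} (hab : a ≠ b) (hac : a ≠ c) (hbc : b ≠ c)
    (hab' : a' ≠ b') (hac' : a' ≠ c') (hbc' : b' ≠ c') :
    ∃ g : Γ, g • a = a' ∧ g • b = b' ∧ g • c = c' := by
  have inj : ∀ {x y z : Ω}, x ≠ y → x ≠ z → y ≠ z → Function.Injective ![x, y, z] := by
    intro x y z hxy hxz hyz i j
    fin_cases i <;> fin_cases j <;> simp_all [eq_comm]
  obtain ⟨g, hg⟩ := exists_smul_eq Γ (⟨_, inj hab hac hbc⟩ : Fin 3 ↪ Ω) ⟨_, inj hab' hac' hbc'⟩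
  exact ⟨g, DFunLike.congr_fun hg 0, DFunLike.congr_fun hg 1, DFunLike.congr_fun hg 2⟩

theorem infinite_of_faithfulSMul_of_not_isOfFinOrder [FaithfulSMul Γ Ω] {g : Γ}
    (hg : ¬IsOfFinOrder g) : Infinite Ω := by
  by_contra hΩ
  have : Finite Ω := not_infinite_iff_finite.mp hΩ
  have : Finite Γ := Finite.of_injective _ (toPerm_injective (α := Γ) (β := Ω))
  exact hg (isOfFinOrder_of_finite g)

theorem rel_of_shift_closed [Infinite Ω] {P : Ω → Ω → Prop} {a b : Ω} (hab : a ≠ b) (hP : P a b)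
    (hshift : ∀ y z w, y ≠ z → y ≠ w → z ≠ w → P y z → P z w) {y z : Ω} (hyz : y ≠ z) :
    P y z := by
  classical
  obtain ⟨w, hw⟩ := Infinite.exists_notMem_finset ({a, b, y, z} : Finset Ω)
  obtain ⟨v, hv⟩ := Infinite.exists_notMem_finset ({b, w, y, z} : Finset Ω)
  simp only [Finset.mem_insert, Finset.mem_singleton, not_or] at hw hv
  have hbw := hshift a b w hab (Ne.symm hw.1) (Ne.symm hw.2.1) hP
  have hwv := hshift b w v (Ne.symm hw.2.1) (Ne.symm hv.1) (Ne.symm hv.2.1) hbw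
  have hvy := hshift w v y (Ne.symm hv.2.1) hw.2.2.1 hv.2.2.1 hwv
  exact hshift v y z hv.2.2.1 hv.2.2.2 hyz hvy

theorem eq_top_of_stabilizer_inf_le [IsMultiplyPretransitive Γ Ω 3] [Infinite Ω]
    {K : Subgroup Γ} (hcube : ∀ g : Γ, g ^ 3 ∈ K → g ∈ K) {π₁ π₂ : Ω} (hπ : π₁ ≠ π₂)
    (hK : stabilizer Γ π₁ ⊓ stabilizer Γ π₂ ≤ K) : K = ⊤ := by
  have hshift : ∀ y z w, y ≠ z → y ≠ w → z ≠ w →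
      (∃ k ∈ K, k • π₁ = y ∧ k • π₂ = z) → ∃ k ∈ K, k • π₁ = z ∧ k • π₂ = w := by
    rintro y z w hyz hyw hzw ⟨k, hk, rfl, rfl⟩
    -- a 3-cycle `g` of `(y, z, w)` has its cube in `k (stabilizer of π₁, π₂) k⁻¹ ≤ K`
    obtain ⟨g, hgy, hgz, hgw⟩ := exists_smul_eq_of_isMultiplyPretransitive_three Γ
      hyz hyw hzw hzw hyz.symm hyw.symm
    have hg3 : k⁻¹ * g ^ 3 * k ∈ K := hK ⟨by simp [pow_succ, mul_smul, hgy, hgz, hgw],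
      by simp [pow_succ, mul_smul, hgy, hgz, hgw]⟩
    have hgK : g ∈ K := hcube g <| by
      convert K.mul_mem (K.mul_mem hk hg3) (K.inv_mem hk) using 1; group
    exact ⟨g * k, K.mul_mem hgK hk, by rw [mul_smul, hgy], by rw [mul_smul, hgz]⟩
  refine eq_top_iff.mpr fun g _ => ?_
  obtain ⟨k, hk, hk₁, hk₂⟩ := rel_of_shift_closed hπ ⟨1, K.one_mem, one_smul _ _, one_smul _ _⟩
    hshift ((MulAction.injective g).ne hπ)
  have : k⁻¹ * g ∈ K := hK ⟨by simp [mul_smul, ← hk₁], by simp [mul_smul, ← hk₂]⟩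
  simpa using K.mul_mem hk this

theorem sq_eq_one_of_normal_of_free [IsMultiplyPretransitive Γ Ω 3] [Infinite Ω]
    {N : Subgroup Γ} (hN : N.Normal) (hfree : ∀ m ∈ N, ∀ ω : Ω, m • ω = ω → m = 1)
    {n : Γ} (hn : n ∈ N) : n ^ 2 = 1 := by
  classical
  by_contra hn2
  obtain ⟨a, ha⟩ : ∃ a : Ω, n • a ≠ a := by
    by_contra! hfix
    exact hn2 (by rw [hfree n hn _ (hfix (Classical.arbitrary Ω)), one_pow])
  have hab : a ≠ n • a := Ne.symm ha
  have hbc : n • a ≠ n • n • a := (MulAction.injective n).ne hab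
  have hac : a ≠ n • n • a := fun h =>
    hn2 (hfree _ (N.pow_mem hn 2) a (by rw [pow_two, mul_smul]; exact h.symm))
  obtain ⟨d, hd⟩ := Infinite.exists_notMem_finset ({a, n • a, n • n • a} : Finset Ω)
  simp only [Finset.mem_insert, Finset.mem_singleton, not_or] at hd
  obtain ⟨h, hha, hhb, hhc⟩ := exists_smul_eq_of_isMultiplyPretransitive_three Γ
    hab hac hbc hab (Ne.symm hd.1) (Ne.symm hd.2.1)
  have hua : (h * n * h⁻¹) • a = n • a := by
    rw [mul_smul, mul_smul, inv_smul_eq_iff.mpr hha.symm, hhb]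
  have hub : (h * n * h⁻¹) • n • a = d := by
    rw [mul_smul, mul_smul, inv_smul_eq_iff.mpr hhb.symm, hhc]
  -- `h n h⁻¹ ∈ N` agrees with `n` at `a`, hence everywhere, but not at `n • a`
  have hun : h * n * h⁻¹ = n := by
    refine inv_mul_eq_one.mp (hfree _ (N.mul_mem (N.inv_mem (hN.conj_mem n hn h)) hn) a ?_)
    rw [mul_smul, inv_smul_eq_iff, hua]
  exact hd.2.2 (by rw [← hub, hun])

end MultiplyTransitive

section OrderedMultiplyTransitive

variable {Γ α Ω : Type*} [Group Γ] [ConditionallyCompleteLinearOrder α] [MulAction Γ α]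
  [MulAction Γ Ω] [IsMultiplyPretransitive Γ Ω 3] [Infinite Ω]

theorem not_bddAbove_orbit_stabilizer_inf (hmono : ∀ g : Γ, StrictMono (g • · : α → α))
    (hfix : ∀ x : α, ∃ g : Γ, g • x ≠ x) {π₁ π₂ : Ω} (hπ : π₁ ≠ π₂) (x : α) :
    ¬BddAbove (orbit (stabilizer Γ π₁ ⊓ stabilizer Γ π₂ : Subgroup Γ) x) := by
  intro hbdd
  set H := stabilizer Γ π₁ ⊓ stabilizer Γ π₂
  have hHs : H ≤ stabilizer Γ (sSup (orbit H x)) := fun h hh =>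
    smul_csSup_orbit (Γ := H) (fun h => hmono h) hbdd ⟨h, hh⟩
  have htop := eq_top_of_stabilizer_inf_le
    (fun g hg => smul_eq_of_pow_smul_eq hmono three_ne_zero hg) hπ hHs
  obtain ⟨g, hg⟩ := hfix (sSup (orbit H x))
  exact hg (by rw [← mem_stabilizer_iff, htop]; exact Subgroup.mem_top g)

theorem smul_eq_self_of_mem_boundedSupport [Nonempty α] [FaithfulSMul Γ α]
    (hmono : ∀ g : Γ, StrictMono (g • · : α → α)) (hfix : ∀ x : α, ∃ g : Γ, g • x ≠ x) {m : Γ}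
    (hm : m ∈ boundedSupport Γ α) {d : Ω} (hd : m • d = d) (ω : Ω) : m • ω = ω := by
  by_contra hω
  obtain ⟨a, b, hab⟩ := bddBelow_bddAbove_iff_subset_Icc.mp hm
  have hdω : d ≠ ω := by rintro rfl; exact hω hd
  have hdω' : d ≠ m • ω := fun h => hdω ((smul_left_cancel_iff m).mp (by rw [hd]; exact h))
  have : IsMultiplyPretransitive Γ Ω 2 :=
    isMultiplyPretransitive_of_le' (n := 3) (by norm_num) (by simp)
  obtain ⟨h, hhω, hhω'⟩ := is_two_pretransitive_iff.mp this (Ne.symm hω) (Ne.symm hdω)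
  obtain ⟨_, ⟨⟨f, hf₁, hf₂⟩, rfl⟩, hf⟩ :=
    not_bddAbove_iff.mp (not_bddAbove_orbit_stabilizer_inf hmono hfix (Ne.symm hdω) a) (h • b)
  have hf₁ : f • ω = ω := hf₁
  have hf₂ : f • d = d := hf₂
  -- the supports `[h • a, h • b]` and `[f • a, f • b]` of the conjugates are disjoint
  have hcomm : Commute (h * m * h⁻¹) (f * m * f⁻¹) := commute_of_disjoint_movedBy <|
    disjoint_left.mpr fun y hy hy' => ((movedBy_conj_subset_Icc hmono hab h hy).2.trans_lt
      hf).not_ge (movedBy_conj_subset_Icc hmono hab f hy').1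
  have hu : (h * m * h⁻¹) • ω = d := by
    rw [mul_smul, mul_smul, inv_smul_eq_iff.mpr hhω.symm, hhω']
  have hv : (f * m * f⁻¹) • d = d := by
    rw [mul_smul, mul_smul, inv_smul_eq_iff.mpr hf₂.symm, hd, hf₂]
  have hvω : (f * m * f⁻¹) • ω = ω := by
    apply (smul_left_cancel_iff (h * m * h⁻¹)).mp
    rw [← mul_smul, hcomm.eq, mul_smul, hu, hv]
  apply hω
  apply (smul_left_cancel_iff f).mp
  rw [hf₁]
  rwa [mul_smul, mul_smul, inv_smul_eq_iff.mpr hf₁.symm] at hvω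

end OrderedMultiplyTransitive

/-- **(Le Boudec--Matte Bon, Proposition 6.2.)** Let `G ≤ Homeo⁺(ℝ)` be a group of
orientation-preserving (strictly increasing) homeomorphisms of the real line, acting on `ℝ`
with no global fixed point, and containing a non-trivial element with compact support.
Then the transitivity degree of `G` is at most `2`: every faithful `k`-transitive action
of `G` on a set satisfies `k ≤ 2`. -/
theorem line_transitivity_degree_le_two
    (G : Subgroup (Equiv.Perm ℝ))
    (hmono : ∀ g ∈ G, StrictMono (g : Equiv.Perm ℝ))
    (hnofix : ∀ x : ℝ, ∃ g ∈ G, (g : Equiv.Perm ℝ) x ≠ x)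
    (hcompact : ∃ g ∈ G, g ≠ (1 : Equiv.Perm ℝ) ∧
      ∃ K : Set ℝ, IsCompact K ∧ ∀ x ∉ K, (g : Equiv.Perm ℝ) x = x) :
    ∀ (Ω : Type u) (ρ : G →* Equiv.Perm Ω) (k : ℕ),
      Function.Injective ρ → IsKTransitive ρ k → k ≤ 2 := by
  intro Ω ρ k hρ htrans
  by_contra! hk
  let _ := MulAction.compHom Ω ρ
  have : FaithfulSMul G Ω := ⟨fun h => hρ (Equiv.ext h)⟩
  have hmono' : ∀ g : G, StrictMono (g • · : ℝ → ℝ) := fun g => hmono g g.2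
  have hfix : ∀ x : ℝ, ∃ g : G, g • x ≠ x := fun x =>
    let ⟨g, hg, hgx⟩ := hnofix x; ⟨⟨g, hg⟩, hgx⟩
  obtain ⟨n, hnG, hn1, K, hK, hnK⟩ := hcompact
  have hnK' : (fixedBy ℝ (⟨n, hnG⟩ : G))ᶜ ⊆ K := fun x hx => by_contra fun hxK => hx (hnK x hxK)
  have hn : (⟨n, hnG⟩ : G) ∈ boundedSupport G ℝ := ⟨hK.bddBelow.mono hnK', hK.bddAbove.mono hnK'⟩
  have hn_inf : ¬IsOfFinOrder (⟨n, hnG⟩ : G) :=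
    not_isOfFinOrder_of_strictMono_smul hmono' fun h => hn1 (congrArg Subtype.val h)
  have : Infinite Ω := infinite_of_faithfulSMul_of_not_isOfFinOrder hn_inf
  have : IsMultiplyPretransitive G Ω k :=
    ⟨fun x y => let ⟨g, hg⟩ := htrans x y; ⟨g, Function.Embedding.ext hg⟩⟩
  have : IsMultiplyPretransitive G Ω 3 := isMultiplyPretransitive_of_le' hk (by simp)
  have hfree : ∀ m ∈ boundedSupport G ℝ, ∀ ω : Ω, m • ω = ω → m = 1 := fun m hm ω hω =>
    eq_of_smul_eq_smul fun ω' => by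
      rw [one_smul]; exact smul_eq_self_of_mem_boundedSupport hmono' hfix hm hω ω'
  exact hn_inf (isOfFinOrder_iff_pow_eq_one.mpr
    ⟨2, two_pos, sq_eq_one_of_normal_of_free (boundedSupport_normal hmono') hfree hn⟩)
end
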